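/- Let μ ∈ L^∞(ℍ). Then for every ζ ∈ ℍ* the integral Φ_μ(ζ) := −(6/π) ∫_ℍ μ(z) (z − ζ)⁻⁴ dA(z) converges absolutely, the function Φ_μ is holomorphic on ℍ*, and |Φ_μ(ζ)| · (Im ζ)² ≤ (3/2) ‖μ‖_{L^∞(ℍ)} for all ζ ∈ ℍ*. -/

import Mathlib

/-!
The kernel `|z - ζ|⁻⁴` is integrable over `ℍ` for `Im ζ < 0`, and by Fubini
`∫_ℍ |z - ζ|⁻⁴ dA = π / (4 (Im ζ)²)`: the inner integral `∫_ℝ ((x - a)² + c²)⁻² dx = π / (2c³)`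
comes from `x = a + c tan θ`, and then `∫₀^∞ (y - Im ζ)⁻³ dy = 1 / (2 (Im ζ)²)`.
Dominating `μ z (z - ζ)⁻⁴` by `‖μ‖_∞ |z - ζ|⁻⁴` gives absolute convergence and the bound
`(6/π) · ‖μ‖_∞ · π / (4 (Im ζ)²) · (Im ζ)² = (3/2) ‖μ‖_∞`. Holomorphy follows by differentiating
under the integral sign: all of `ℍ` stays at distance at least `-Im ζ₀` from `ζ₀`.
-/

open MeasureTheory Real Set Filter Topology

-- With `x = tan θ` the integrand becomes `cos² θ dθ`, whose primitive is `(θ + sin θ cos θ) / 2`.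
theorem hasDerivAt_arctan_add_sin_mul_cos_arctan (x : ℝ) :
    HasDerivAt (fun x => (arctan x + sin (arctan x) * cos (arctan x)) / 2)
      ((1 + x ^ 2) ^ 2)⁻¹ x := by
  have hθ := hasDerivAt_arctan x
  refine ((hθ.add (hθ.sin.mul hθ.cos)).div_const 2).congr_deriv ?_
  have hcos : 1 + cos (arctan x) ^ 2 - sin (arctan x) ^ 2 = 2 / (1 + x ^ 2) := by
    linear_combination 2 * cos_sq_arctan x - sin_sq_add_cos_sq (arctan x)
  calc _ = 1 / (1 + x ^ 2) * (1 + cos (arctan x) ^ 2 - sin (arctan x) ^ 2) / 2 := by ring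
    _ = _ := by
      rw [hcos]
      field_simp

theorem integrable_inv_one_add_sq_sq : Integrable fun x : ℝ => ((1 + x ^ 2) ^ 2)⁻¹ := by
  refine integrable_inv_one_add_sq.mono' (by fun_prop) (ae_of_all _ fun x => ?_)
  have h : 1 ≤ 1 + x ^ 2 := by nlinarith
  rw [norm_inv, norm_pow, Real.norm_of_nonneg (by positivity)]
  exact inv_anti₀ (by positivity) (le_self_pow₀ h two_ne_zero)

theorem integral_inv_one_add_sq_sq : ∫ x : ℝ, ((1 + x ^ 2) ^ 2)⁻¹ = π / 2 := by
  set G : ℝ → ℝ := fun θ => (θ + sin θ * cos θ) / 2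
  have hG : Continuous G := by fun_prop
  have hbot : Tendsto (G ∘ arctan) atBot (𝓝 (G (-(π / 2)))) :=
    hG.continuousAt.tendsto.comp (tendsto_arctan_atBot.mono_right nhdsWithin_le_nhds)
  have htop : Tendsto (G ∘ arctan) atTop (𝓝 (G (π / 2))) :=
    hG.continuousAt.tendsto.comp (tendsto_arctan_atTop.mono_right nhdsWithin_le_nhds)
  rw [integral_of_hasDerivAt_of_tendsto hasDerivAt_arctan_add_sin_mul_cos_arctan
    integrable_inv_one_add_sq_sq hbot htop]
  simp only [G, cos_pi_div_two, cos_neg]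
  ring

theorem inv_sub_sq_add_sq_sq_eq (x a : ℝ) {c : ℝ} (hc : c ≠ 0) :
    (((x - a) ^ 2 + c ^ 2) ^ 2)⁻¹ = (c ^ 4)⁻¹ * ((1 + ((x - a) / c) ^ 2) ^ 2)⁻¹ := by
  field_simp
  ring

theorem integrable_inv_sub_sq_add_sq_sq (a : ℝ) {c : ℝ} (hc : 0 < c) :
    Integrable fun x : ℝ => (((x - a) ^ 2 + c ^ 2) ^ 2)⁻¹ := by
  simp_rw [inv_sub_sq_add_sq_sq_eq _ a hc.ne']
  refine Integrable.const_mul ?_ _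
  exact ((integrable_comp_div_iff (fun t : ℝ => ((1 + t ^ 2) ^ 2)⁻¹) hc.ne').2
    integrable_inv_one_add_sq_sq).comp_sub_right a

theorem integral_inv_sub_sq_add_sq_sq (a : ℝ) {c : ℝ} (hc : 0 < c) :
    ∫ x : ℝ, (((x - a) ^ 2 + c ^ 2) ^ 2)⁻¹ = π / (2 * c ^ 3) := by
  simp_rw [inv_sub_sq_add_sq_sq_eq _ a hc.ne']
  rw [integral_const_mul, integral_sub_right_eq_self (fun x => ((1 + (x / c) ^ 2) ^ 2)⁻¹) a,
    Measure.integral_comp_div (fun t : ℝ => ((1 + t ^ 2) ^ 2)⁻¹) c, integral_inv_one_add_sq_sq,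
    abs_of_pos hc, smul_eq_mul]
  field_simp

theorem hasDerivAt_neg_inv_two_mul_sub_sq {b y : ℝ} (hy : y ≠ b) :
    HasDerivAt (fun y => -(2 * (y - b) ^ 2)⁻¹) ((y - b) ^ 3)⁻¹ y := by
  have hyb : y - b ≠ 0 := sub_ne_zero.2 hy
  have h : HasDerivAt (fun y => 2 * (y - b) ^ 2) (2 * (2 * (y - b))) y := by
    simpa using (((hasDerivAt_id y).sub_const b).pow 2).const_mul 2
  refine (h.inv (by positivity)).neg.congr_deriv ?_
  field_simp

theorem tendsto_neg_inv_two_mul_sub_sq (b : ℝ) :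
    Tendsto (fun y : ℝ => -(2 * (y - b) ^ 2)⁻¹) atTop (𝓝 0) := by
  have h2 : Tendsto (fun y : ℝ => 2 * (y - b) ^ 2) atTop atTop :=
    ((tendsto_pow_atTop two_ne_zero).comp (tendsto_atTop_add_const_right _ (-b) tendsto_id)
      |>.const_mul_atTop two_pos).congr fun y => by simp [sub_eq_add_neg]
  simpa using h2.inv_tendsto_atTop.neg

theorem integrableOn_Ioi_inv_sub_pow_three {b : ℝ} (hb : b < 0) :
    IntegrableOn (fun y : ℝ => ((y - b) ^ 3)⁻¹) (Ioi 0) :=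
  integrableOn_Ioi_deriv_of_nonneg'
    (fun _ hy => hasDerivAt_neg_inv_two_mul_sub_sq (hb.trans_le hy).ne')
    (fun _ hy => inv_nonneg.2 (pow_nonneg (sub_nonneg.2 (hb.trans hy).le) 3))
    (tendsto_neg_inv_two_mul_sub_sq b)

theorem integral_Ioi_inv_sub_pow_three {b : ℝ} (hb : b < 0) :
    ∫ y in Ioi 0, ((y - b) ^ 3)⁻¹ = (2 * b ^ 2)⁻¹ := by
  rw [integral_Ioi_of_hasDerivAt_of_nonneg'
    (fun _ hy => hasDerivAt_neg_inv_two_mul_sub_sq (hb.trans_le hy).ne')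
    (fun _ hy => inv_nonneg.2 (pow_nonneg (sub_nonneg.2 (hb.trans hy).le) 3))
    (tendsto_neg_inv_two_mul_sub_sq b)]
  simp

section HalfPlaneKernel

variable (a : ℝ) {b : ℝ}

theorem integral_inv_sub_sq_add_sub_sq_sq (hb : b < 0) {y : ℝ} (hy : 0 < y) :
    ∫ x : ℝ, (((x - a) ^ 2 + (y - b) ^ 2) ^ 2)⁻¹ = π / 2 * ((y - b) ^ 3)⁻¹ := by
  rw [integral_inv_sub_sq_add_sq_sq a (by linarith), mul_comm 2, ← div_div]
  ring

theorem integrable_prod_Ioi_inv_sub_sq_add_sub_sq_sq (hb : b < 0) :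
    Integrable (fun p : ℝ × ℝ => (((p.1 - a) ^ 2 + (p.2 - b) ^ 2) ^ 2)⁻¹)
      (volume.prod (volume.restrict (Ioi 0))) := by
  rw [integrable_prod_iff' (Measurable.aestronglyMeasurable (by fun_prop))]
  constructor
  · filter_upwards [ae_restrict_mem measurableSet_Ioi] with y (hy : 0 < y)
    exact integrable_inv_sub_sq_add_sq_sq a (by linarith)
  · refine ((integrableOn_Ioi_inv_sub_pow_three hb).const_mul (π / 2)).congr ?_
    filter_upwards [ae_restrict_mem measurableSet_Ioi] with y (hy : 0 < y)
    simp only [Real.norm_of_nonneg (inv_nonneg.2 (sq_nonneg _))]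
    exact (integral_inv_sub_sq_add_sub_sq_sq a hb hy).symm

theorem integral_prod_Ioi_inv_sub_sq_add_sub_sq_sq (hb : b < 0) :
    ∫ p, (((p.1 - a) ^ 2 + (p.2 - b) ^ 2) ^ 2)⁻¹ ∂(volume.prod (volume.restrict (Ioi 0))) =
      π / (4 * b ^ 2) := by
  rw [integral_prod_symm _ (integrable_prod_Ioi_inv_sub_sq_add_sub_sq_sq a hb),
    setIntegral_congr_fun measurableSet_Ioi fun y hy => integral_inv_sub_sq_add_sub_sq_sq a hb hy,
    integral_const_mul, integral_Ioi_inv_sub_pow_three hb]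
  field_simp
  ring

end HalfPlaneKernel

namespace Complex

theorem volume_restrict_im_pos :
    volume.restrict {z : ℂ | 0 < z.im} =
      (volume.prod (volume.restrict (Ioi 0))).map measurableEquivRealProd.symm := by
  have hpre : measurableEquivRealProd.symm ⁻¹' {z : ℂ | 0 < z.im} = univ ×ˢ Ioi (0 : ℝ) := by
    ext p
    simp [measurableEquivRealProd_symm_apply]
  rw [← volume_preserving_equiv_real_prod.symm.map_eq,
    Measure.restrict_map measurableEquivRealProd.symm.measurable
      (measurableSet_lt measurable_const measurable_im),
    hpre, Measure.volume_eq_prod, ← Measure.prod_restrict, Measure.restrict_univ]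

theorem inv_norm_sub_pow_four_symm_equivRealProd (ζ : ℂ) (p : ℝ × ℝ) :
    (‖measurableEquivRealProd.symm p - ζ‖ ^ 4)⁻¹ =
      (((p.1 - ζ.re) ^ 2 + (p.2 - ζ.im) ^ 2) ^ 2)⁻¹ := by
  rw [show 4 = 2 * 2 from rfl, pow_mul, Complex.sq_norm, normSq_apply]
  simp [measurableEquivRealProd_symm_apply, sq]

theorem integrableOn_im_pos_inv_norm_sub_pow_four {ζ : ℂ} (hζ : ζ.im < 0) :
    IntegrableOn (fun z : ℂ => (‖z - ζ‖ ^ 4)⁻¹) {z : ℂ | 0 < z.im} := by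
  rw [IntegrableOn, volume_restrict_im_pos, integrable_map_equiv]
  simpa only [Function.comp_def, inv_norm_sub_pow_four_symm_equivRealProd] using
    integrable_prod_Ioi_inv_sub_sq_add_sub_sq_sq ζ.re hζ

theorem setIntegral_im_pos_inv_norm_sub_pow_four {ζ : ℂ} (hζ : ζ.im < 0) :
    ∫ z in {z : ℂ | 0 < z.im}, (‖z - ζ‖ ^ 4)⁻¹ = π / (4 * ζ.im ^ 2) := by
  rw [volume_restrict_im_pos, integral_map_equiv]
  simpa only [inv_norm_sub_pow_four_symm_equivRealProd] using
    integral_prod_Ioi_inv_sub_sq_add_sub_sq_sq ζ.re hζ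

theorem neg_im_lt_norm_sub {z : ℂ} (hz : 0 < z.im) (ζ : ℂ) : -ζ.im < ‖z - ζ‖ :=
  calc -ζ.im < (z - ζ).im := by rw [sub_im]; linarith
    _ ≤ ‖z - ζ‖ := im_le_norm _

section EssentiallyBounded

variable {f : ℂ → ℂ} {M : ℝ}

theorem ae_norm_div_sub_pow_four_le {ν : Measure ℂ} (hM : ∀ᵐ z ∂ν, ‖f z‖ ≤ M) (ζ : ℂ) :
    ∀ᵐ z ∂ν, ‖f z / (z - ζ) ^ 4‖ ≤ M * (‖z - ζ‖ ^ 4)⁻¹ := by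
  filter_upwards [hM] with z hz
  rw [norm_div, norm_pow, div_eq_mul_inv]
  gcongr

theorem integrableOn_im_pos_div_sub_pow_four
    (hf : AEStronglyMeasurable f (volume.restrict {z : ℂ | 0 < z.im}))
    (hM : ∀ᵐ z ∂volume.restrict {z : ℂ | 0 < z.im}, ‖f z‖ ≤ M) {ζ : ℂ} (hζ : ζ.im < 0) :
    IntegrableOn (fun z => f z / (z - ζ) ^ 4) {z : ℂ | 0 < z.im} :=
  ((integrableOn_im_pos_inv_norm_sub_pow_four hζ).const_mul M).mono'
    (hf.div₀ (by fun_prop)) (ae_norm_div_sub_pow_four_le hM ζ)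

theorem norm_setIntegral_im_pos_div_sub_pow_four_le
    (hM : ∀ᵐ z ∂volume.restrict {z : ℂ | 0 < z.im}, ‖f z‖ ≤ M) {ζ : ℂ} (hζ : ζ.im < 0) :
    ‖∫ z in {z : ℂ | 0 < z.im}, f z / (z - ζ) ^ 4‖ ≤ M * (π / (4 * ζ.im ^ 2)) := by
  rw [← setIntegral_im_pos_inv_norm_sub_pow_four hζ, ← integral_const_mul]
  exact norm_integral_le_of_norm_le ((integrableOn_im_pos_inv_norm_sub_pow_four hζ).const_mul M)
    (ae_norm_div_sub_pow_four_le hM ζ)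

end EssentiallyBounded

end Complex

theorem hasDerivAt_div_sub_pow (a : ℂ) (n : ℕ) {z ζ : ℂ} (h : z ≠ ζ) :
    HasDerivAt (fun ζ => a / (z - ζ) ^ n) (n * a / (z - ζ) ^ (n + 1)) ζ := by
  have hz : z - ζ ≠ 0 := sub_ne_zero.2 h
  refine ((hasDerivAt_const ζ a).div (((hasDerivAt_id ζ).const_sub z).fun_pow n)
    (pow_ne_zero n hz)).congr_deriv ?_
  rcases n with _ | n
  · simp
  · simp only [id, Nat.add_sub_cancel]
    field_simp
    ring

theorem half_le_norm_sub_of_mem_ball {z ζ ζ₀ : ℂ} {d : ℝ} (hz : d ≤ ‖z - ζ₀‖)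
    (hζ : ζ ∈ Metric.ball ζ₀ (d / 2)) : ‖z - ζ₀‖ / 2 ≤ ‖z - ζ‖ := by
  rw [mem_ball_iff_norm] at hζ
  have := norm_sub_le_norm_sub_add_norm_sub z ζ ζ₀
  linarith

theorem hasDerivAt_integral_div_sub_pow {ν : Measure ℂ} {f : ℂ → ℂ} {ζ₀ : ℂ} {d : ℝ} (n : ℕ)
    (hd : 0 < d) (hf : AEStronglyMeasurable f ν) (hsep : ∀ᵐ z ∂ν, d ≤ ‖z - ζ₀‖)
    (hint : Integrable (fun z => f z / (z - ζ₀) ^ n) ν) :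
    HasDerivAt (fun ζ => ∫ z, f z / (z - ζ) ^ n ∂ν) (∫ z, n * f z / (z - ζ₀) ^ (n + 1) ∂ν) ζ₀ := by
  have hmeas (m : ℕ) (c ζ : ℂ) : AEStronglyMeasurable (fun z => c * f z / (z - ζ) ^ m) ν :=
    (hf.const_mul c).div₀ (by fun_prop : Continuous fun z => (z - ζ) ^ m).aestronglyMeasurable
  refine (hasDerivAt_integral_of_dominated_loc_of_deriv_le
    (F' := fun ζ z => n * f z / (z - ζ) ^ (n + 1))
    (bound := fun z => n * 2 ^ (n + 1) / d * ‖f z / (z - ζ₀) ^ n‖)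
    (Metric.ball_mem_nhds ζ₀ (half_pos hd))
    (Eventually.of_forall fun ζ => by simpa using hmeas n 1 ζ)
    hint (hmeas (n + 1) n ζ₀) ?_ (hint.norm.const_mul _) ?_).2
  · filter_upwards [hsep] with z hz ζ hζ
    have hfar := half_le_norm_sub_of_mem_ball hz hζ
    have hB : 0 < ‖z - ζ₀‖ := hd.trans_le hz
    calc ‖n * f z / (z - ζ) ^ (n + 1)‖ = n * ‖f z‖ / (‖z - ζ‖ ^ n * ‖z - ζ‖) := by
          rw [norm_div, norm_mul, Complex.norm_natCast, norm_pow, pow_succ]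
      _ ≤ n * ‖f z‖ / ((‖z - ζ₀‖ / 2) ^ n * (d / 2)) := by gcongr; linarith
      _ = n * 2 ^ (n + 1) / d * ‖f z / (z - ζ₀) ^ n‖ := by
          rw [norm_div, norm_pow, div_pow, pow_succ]
          field_simp
  · filter_upwards [hsep] with z hz ζ hζ
    refine hasDerivAt_div_sub_pow (f z) n (sub_ne_zero.1 (norm_pos_iff.1 ?_))
    linarith [half_le_norm_sub_of_mem_ball hz hζ]

theorem ae_norm_le_toReal_eLpNorm_top {α E : Type*} [MeasurableSpace α] [NormedAddCommGroup E]
    {μ : Measure α} {f : α → E} (hf : eLpNorm f ⊤ μ ≠ ⊤) :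
    ∀ᵐ x ∂μ, ‖f x‖ ≤ (eLpNorm f ⊤ μ).toReal := by
  rw [eLpNorm_exponent_top (f := f)] at hf ⊢
  filter_upwards [ae_le_eLpNormEssSup (f := f) (μ := μ)] with x hx
  simpa using ENNReal.toReal_mono hf hx

/-- For `μ ∈ L^∞(ℍ)`, the integral
`Φ_μ(ζ) = −(6/π) ∫_ℍ μ(z)(z − ζ)⁻⁴ dA(z)` converges absolutely for every `ζ ∈ ℍ*`, the
function `Φ_μ` is holomorphic on ℍ*, and `|Φ_μ(ζ)|·(Im ζ)² ≤ (3/2)·‖μ‖_{L^∞(ℍ)}` on ℍ*. -/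
theorem bers_derivative_integral_holomorphic_and_bound (μ : ℂ → ℂ) (hμm : Measurable μ)
    (hμb : eLpNorm μ ⊤ (volume.restrict {z : ℂ | 0 < z.im}) ≠ ⊤) :
    (∀ ζ : ℂ, ζ.im < 0 →
      IntegrableOn (fun z : ℂ => μ z / (z - ζ) ^ 4) {z : ℂ | 0 < z.im} volume) ∧
    DifferentiableOn ℂ
      (fun ζ : ℂ => -(6 / Real.pi : ℂ) * ∫ z in {z : ℂ | 0 < z.im}, μ z / (z - ζ) ^ 4)
      {ζ : ℂ | ζ.im < 0} ∧
    ∀ ζ : ℂ, ζ.im < 0 →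
      ‖-(6 / Real.pi : ℂ) * ∫ z in {z : ℂ | 0 < z.im}, μ z / (z - ζ) ^ 4‖ *
          ζ.im ^ 2 ≤
        (3 / 2) * (eLpNorm μ ⊤ (volume.restrict {z : ℂ | 0 < z.im})).toReal := by
  have hM := ae_norm_le_toReal_eLpNorm_top hμb
  have hint (ζ : ℂ) (hζ : ζ.im < 0) :=
    Complex.integrableOn_im_pos_div_sub_pow_four hμm.aestronglyMeasurable hM hζ
  refine ⟨hint, fun ζ₀ (hζ₀ : ζ₀.im < 0) => ?_, fun ζ hζ => ?_⟩
  · have hsep : ∀ᵐ z ∂volume.restrict {z : ℂ | 0 < z.im}, -ζ₀.im ≤ ‖z - ζ₀‖ := by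
      filter_upwards [ae_restrict_mem (measurableSet_lt measurable_const Complex.measurable_im)]
        with z hz
      exact (Complex.neg_im_lt_norm_sub hz ζ₀).le
    exact ((hasDerivAt_integral_div_sub_pow 4 (neg_pos.2 hζ₀) hμm.aestronglyMeasurable hsep
      (hint ζ₀ hζ₀)).differentiableAt.const_mul _).differentiableWithinAt
  · set M := (eLpNorm μ ⊤ (volume.restrict {z : ℂ | 0 < z.im})).toReal
    set Φ := ∫ z in {z : ℂ | 0 < z.im}, μ z / (z - ζ) ^ 4
    have him : ζ.im ≠ 0 := hζ.ne
    calc ‖-(6 / π : ℂ) * Φ‖ * ζ.im ^ 2 = 6 / π * ‖Φ‖ * ζ.im ^ 2 := by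
          rw [norm_mul, norm_neg, norm_div, Complex.norm_ofNat, Complex.norm_real,
            Real.norm_of_nonneg pi_pos.le]
      _ ≤ 6 / π * (M * (π / (4 * ζ.im ^ 2))) * ζ.im ^ 2 := by
          gcongr
          exact Complex.norm_setIntegral_im_pos_div_sub_pow_four_le hM hζ
      _ = 3 / 2 * M := by
          field_simp
          ring
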